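/- arXiv:1312.2991 — 2 statements merged into one kernel-verified Lean document; each statement's English description precedes it below -/
import Mathlib

section
/- Let Γ be a subgroup of SL(2,ℝ), ρ : Γ → GL(2,ℂ) a group homomorphism, and h a ρ-equivariant meromorphic function on ℍ. Then S(h) is an automorphic form of weight 4 for Γ: for every γ = [[a,b],[c,d]] ∈ Γ and every z ∈ ℍ at which h is analytic with h'(z) ≠ 0, ρ(γ)₂₁ h(z) + ρ(γ)₂₂ ≠ 0, and h is analytic at γ·z with h'(γ·z) ≠ 0, one has S(h)(γ·z) = (cz+d)⁴ · S(h)(z). -/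
/-- The Schwarz derivative `S(f) = f'''/f' - (3/2)(f''/f')²`. -/
noncomputable def schwarzian (f : ℂ → ℂ) (z : ℂ) : ℂ :=
  iteratedDeriv 3 f z / deriv f z - (3 / 2) * (iteratedDeriv 2 f z / deriv f z) ^ 2

/-- The automorphy factor `cz + d` for `γ = [[a,b],[c,d]] ∈ SL(2,ℝ)`. -/
noncomputable def jfac (γ : Matrix.SpecialLinearGroup (Fin 2) ℝ) (z : ℂ) : ℂ :=
  (((γ : Matrix (Fin 2) (Fin 2) ℝ) 1 0 : ℝ) : ℂ) * z +
    (((γ : Matrix (Fin 2) (Fin 2) ℝ) 1 1 : ℝ) : ℂ)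

/-- The Möbius action `γ·z = (az+b)/(cz+d)` of `γ ∈ SL(2,ℝ)` on `z ∈ ℂ`. -/
noncomputable def moebius (γ : Matrix.SpecialLinearGroup (Fin 2) ℝ) (z : ℂ) : ℂ :=
  ((((γ : Matrix (Fin 2) (Fin 2) ℝ) 0 0 : ℝ) : ℂ) * z +
    (((γ : Matrix (Fin 2) (Fin 2) ℝ) 0 1 : ℝ) : ℂ)) / jfac γ z

/-- `h` is `ρ`-equivariant: `h(γ·z) = ρ(γ)·h(z)` whenever both sides are defined. -/
def IsRhoEquivariant (Γ : Subgroup (Matrix.SpecialLinearGroup (Fin 2) ℝ))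
    (ρ : Γ →* GL (Fin 2) ℂ) (h : ℂ → ℂ) : Prop :=
  ∀ γ : Γ, ∀ z : ℂ, 0 < z.im → AnalyticAt ℂ h z → AnalyticAt ℂ h (moebius γ z) →
    (ρ γ : Matrix (Fin 2) (Fin 2) ℂ) 1 0 * h z + (ρ γ : Matrix (Fin 2) (Fin 2) ℂ) 1 1 ≠ 0 →
    h (moebius γ z) =
      ((ρ γ : Matrix (Fin 2) (Fin 2) ℂ) 0 0 * h z + (ρ γ : Matrix (Fin 2) (Fin 2) ℂ) 0 1) /
        ((ρ γ : Matrix (Fin 2) (Fin 2) ℂ) 1 0 * h z + (ρ γ : Matrix (Fin 2) (Fin 2) ℂ) 1 1)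

/-!
The Schwarzian obeys the chain rule `S(f ∘ g) = (S(f) ∘ g) · g'² + S(g)` and vanishes on
linear fractional maps. Near `z`, equivariance reads `h ∘ γ = ρ(γ) ∘ h`; the chain rule applied
to both sides gives `S(h)(γ·z) · γ'(z)² = S(h)(z)`, and `γ'(z) = (cz+d)⁻²`.
-/

open Filter Topology

section LinearFractional

variable {𝕜 : Type*} [NontriviallyNormedField 𝕜] (a b c d : 𝕜) {z : 𝕜}

theorem hasDerivAt_const_div_linear_pow (e : 𝕜) (n : ℕ) (hz : c * z + d ≠ 0) :
    HasDerivAt (fun w => e / (c * w + d) ^ n) (-(n * c * e) / (c * z + d) ^ (n + 1)) z := by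
  have hlin : HasDerivAt (fun w => c * w + d) c z := by
    simpa using ((hasDerivAt_id z).const_mul c).add_const d
  refine ((hasDerivAt_const z e).div (hlin.fun_pow n) (pow_ne_zero n hz)).congr_deriv ?_
  rcases n with _ | n
  · simp
  · push_cast
    field_simp
    ring

theorem hasDerivAt_linear_fractional (hz : c * z + d ≠ 0) :
    HasDerivAt (fun w => (a * w + b) / (c * w + d)) ((a * d - b * c) / (c * z + d) ^ 2) z := by
  have hnum : HasDerivAt (fun w => a * w + b) a z := by
    simpa using ((hasDerivAt_id z).const_mul a).add_const b
  have hden : HasDerivAt (fun w => c * w + d) c z := by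
    simpa using ((hasDerivAt_id z).const_mul c).add_const d
  refine (hnum.div hden hz).congr_deriv ?_
  field_simp
  ring

theorem analyticAt_linear_fractional (hz : c * z + d ≠ 0) :
    AnalyticAt 𝕜 (fun w => (a * w + b) / (c * w + d)) z := by
  fun_prop (disch := exact hz)

theorem deriv_linear_fractional_ne_zero (hz : c * z + d ≠ 0) (hdet : a * d - b * c ≠ 0) :
    deriv (fun w => (a * w + b) / (c * w + d)) z ≠ 0 := by
  rw [(hasDerivAt_linear_fractional a b c d hz).deriv]
  exact div_ne_zero hdet (pow_ne_zero 2 hz)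

theorem iteratedDeriv_succ_linear_fractional (n : ℕ) (hz : c * z + d ≠ 0) :
    iteratedDeriv (n + 1) (fun w => (a * w + b) / (c * w + d)) z =
      (-c) ^ n * (n + 1).factorial * (a * d - b * c) / (c * z + d) ^ (n + 2) := by
  induction n generalizing z with
  | zero => simpa using (hasDerivAt_linear_fractional a b c d hz).deriv
  | succ n ih =>
    have hnear : ∀ᶠ w in 𝓝 z, c * w + d ≠ 0 :=
      (continuous_const.mul continuous_id |>.add continuous_const).continuousAt.eventually_ne hz
    have heq : iteratedDeriv (n + 1) (fun w => (a * w + b) / (c * w + d)) =ᶠ[𝓝 z]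
        fun w => (-c) ^ n * (n + 1).factorial * (a * d - b * c) / (c * w + d) ^ (n + 2) := by
      filter_upwards [hnear] with w hw using ih hw
    rw [iteratedDeriv_succ, heq.deriv_eq,
      (hasDerivAt_const_div_linear_pow c d _ (n + 2) hz).deriv, Nat.factorial_succ (n + 1)]
    push_cast
    ring

end LinearFractional

section ChainRule

variable {𝕜 : Type*} [NontriviallyNormedField 𝕜] [CompleteSpace 𝕜] {f g : 𝕜 → 𝕜} {z : 𝕜}

theorem AnalyticAt.hasDerivAt_iteratedDeriv (hf : AnalyticAt 𝕜 f z) (n : ℕ) :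
    HasDerivAt (iteratedDeriv n f) (iteratedDeriv (n + 1) f z) z := by
  rw [iteratedDeriv_succ, iteratedDeriv_eq_iterate]
  exact (hf.iterated_deriv n).differentiableAt.hasDerivAt

theorem eventually_analyticAt_comp (hf : AnalyticAt 𝕜 f (g z)) (hg : AnalyticAt 𝕜 g z) :
    ∀ᶠ w in 𝓝 z, AnalyticAt 𝕜 f (g w) ∧ AnalyticAt 𝕜 g w :=
  (hg.continuousAt.eventually hf.eventually_analyticAt).and hg.eventually_analyticAt

theorem iteratedDeriv_two_comp (hf : AnalyticAt 𝕜 f (g z)) (hg : AnalyticAt 𝕜 g z) :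
    iteratedDeriv 2 (f ∘ g) z =
      iteratedDeriv 2 f (g z) * deriv g z ^ 2 + deriv f (g z) * iteratedDeriv 2 g z := by
  have hderiv : deriv (f ∘ g) =ᶠ[𝓝 z] fun w => deriv f (g w) * deriv g w := by
    filter_upwards [eventually_analyticAt_comp hf hg] with w ⟨hfw, hgw⟩
    exact deriv_comp w hfw.differentiableAt hgw.differentiableAt
  have hf1 := (hf.hasDerivAt_iteratedDeriv 1).comp z (hg.hasDerivAt_iteratedDeriv 0)
  have hg1 := hg.hasDerivAt_iteratedDeriv 1
  simp only [iteratedDeriv_one, Nat.reduceAdd] at hf1 hg1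
  rw [iteratedDeriv_succ, iteratedDeriv_one, hderiv.deriv_eq]
  exact (hf1.mul hg1).deriv.trans (by rw [Function.comp_apply]; ring)

theorem iteratedDeriv_three_comp (hf : AnalyticAt 𝕜 f (g z)) (hg : AnalyticAt 𝕜 g z) :
    iteratedDeriv 3 (f ∘ g) z =
      iteratedDeriv 3 f (g z) * deriv g z ^ 3 +
        3 * iteratedDeriv 2 f (g z) * deriv g z * iteratedDeriv 2 g z +
        deriv f (g z) * iteratedDeriv 3 g z := by
  have hsecond : iteratedDeriv 2 (f ∘ g) =ᶠ[𝓝 z] fun w =>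
      iteratedDeriv 2 f (g w) * deriv g w ^ 2 + deriv f (g w) * iteratedDeriv 2 g w := by
    filter_upwards [eventually_analyticAt_comp hf hg] with w ⟨hfw, hgw⟩
    exact iteratedDeriv_two_comp hfw hgw
  have hg0 := hg.hasDerivAt_iteratedDeriv 0
  have hf2 := (hf.hasDerivAt_iteratedDeriv 2).comp z hg0
  have hf1 := (hf.hasDerivAt_iteratedDeriv 1).comp z hg0
  have hg1 := hg.hasDerivAt_iteratedDeriv 1
  have hg2 := hg.hasDerivAt_iteratedDeriv 2
  simp only [iteratedDeriv_one, iteratedDeriv_zero, Nat.reduceAdd] at hf2 hf1 hg0 hg1 hg2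
  rw [iteratedDeriv_succ, hsecond.deriv_eq]
  refine ((hf2.mul (hg1.fun_pow 2)).add (hf1.mul hg2)).deriv.trans ?_
  simp only [Function.comp_apply]
  push_cast
  ring

end ChainRule

section Schwarzian

variable {f g : ℂ → ℂ} {z : ℂ}

theorem Filter.EventuallyEq.schwarzian_eq (hfg : f =ᶠ[𝓝 z] g) :
    schwarzian f z = schwarzian g z := by
  simp only [schwarzian, hfg.deriv_eq, hfg.iteratedDeriv_eq]

theorem schwarzian_comp (hf : AnalyticAt ℂ f (g z)) (hg : AnalyticAt ℂ g z)
    (hf' : deriv f (g z) ≠ 0) (hg' : deriv g z ≠ 0) :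
    schwarzian (f ∘ g) z = schwarzian f (g z) * deriv g z ^ 2 + schwarzian g z := by
  simp only [schwarzian, iteratedDeriv_three_comp hf hg, iteratedDeriv_two_comp hf hg,
    deriv_comp z hf.differentiableAt hg.differentiableAt]
  field_simp
  ring

theorem schwarzian_linear_fractional (a b c d : ℂ) (hz : c * z + d ≠ 0) :
    schwarzian (fun w => (a * w + b) / (c * w + d)) z = 0 := by
  have h2 := iteratedDeriv_succ_linear_fractional a b c d 1 hz
  have h3 := iteratedDeriv_succ_linear_fractional a b c d 2 hz
  simp only [Nat.reduceAdd, Nat.factorial] at h2 h3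
  rw [schwarzian, h2, h3, (hasDerivAt_linear_fractional a b c d hz).deriv]
  field_simp
  ring

end Schwarzian

section Moebius

open Matrix UpperHalfPlane

variable (γ : SpecialLinearGroup (Fin 2) ℝ) {z : ℂ}

theorem jfac_ne_zero (hz : z.im ≠ 0) : jfac γ z ≠ 0 :=
  denom_ne_zero_of_im (γ : GL (Fin 2) ℝ) hz

theorem moebius_eq_linear_fractional :
    moebius γ = fun w => ((γ 0 0 : ℂ) * w + γ 0 1) / ((γ 1 0 : ℂ) * w + γ 1 1) :=
  rfl

theorem hasDerivAt_moebius (hz : jfac γ z ≠ 0) :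
    HasDerivAt (moebius γ) (1 / jfac γ z ^ 2) z := by
  have hdet : (γ 0 0 : ℂ) * γ 1 1 - γ 0 1 * γ 1 0 = 1 := by
    have := γ.det_coe
    rw [det_fin_two] at this
    exact_mod_cast this
  rw [← hdet, moebius_eq_linear_fractional]
  exact hasDerivAt_linear_fractional _ _ _ _ hz

theorem analyticAt_moebius (hz : jfac γ z ≠ 0) : AnalyticAt ℂ (moebius γ) z :=
  analyticAt_linear_fractional _ _ _ _ hz

theorem schwarzian_moebius (hz : jfac γ z ≠ 0) : schwarzian (moebius γ) z = 0 :=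
  schwarzian_linear_fractional _ _ _ _ hz

end Moebius

theorem IsRhoEquivariant.eventuallyEq_comp_moebius
    {Γ : Subgroup (Matrix.SpecialLinearGroup (Fin 2) ℝ)} {ρ : Γ →* GL (Fin 2) ℂ} {h : ℂ → ℂ}
    (hequiv : IsRhoEquivariant Γ ρ h) (γ : Γ) {z : ℂ} (hz : 0 < z.im)
    (hh : AnalyticAt ℂ h z) (hhγ : AnalyticAt ℂ h (moebius γ z))
    (hden : (ρ γ : Matrix (Fin 2) (Fin 2) ℂ) 1 0 * h z + (ρ γ : Matrix (Fin 2) (Fin 2) ℂ) 1 1 ≠ 0) :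
    h ∘ moebius γ =ᶠ[𝓝 z] (fun u => ((ρ γ : Matrix (Fin 2) (Fin 2) ℂ) 0 0 * u +
        (ρ γ : Matrix (Fin 2) (Fin 2) ℂ) 0 1) / ((ρ γ : Matrix (Fin 2) (Fin 2) ℂ) 1 0 * u +
        (ρ γ : Matrix (Fin 2) (Fin 2) ℂ) 1 1)) ∘ h := by
  have hγ := analyticAt_moebius γ (jfac_ne_zero γ hz.ne')
  filter_upwards [Complex.continuous_im.continuousAt.eventually_const_lt hz,
    hh.eventually_analyticAt, hγ.continuousAt.eventually hhγ.eventually_analyticAt,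
    (hh.continuousAt.const_mul _ |>.add_const _).eventually_ne hden] with w hw hhw hhγw hdenw
  exact hequiv γ w hw hhw hhγw hdenw

theorem schwarzian_of_equivariant_is_weight_four_general
    (Γ : Subgroup (Matrix.SpecialLinearGroup (Fin 2) ℝ))
    (ρ : Γ →* GL (Fin 2) ℂ) (h : ℂ → ℂ)
    (hequiv : IsRhoEquivariant Γ ρ h) :
    ∀ γ : Γ, ∀ z : ℂ, 0 < z.im →
      AnalyticAt ℂ h z → deriv h z ≠ 0 →
      (ρ γ : Matrix (Fin 2) (Fin 2) ℂ) 1 0 * h z + (ρ γ : Matrix (Fin 2) (Fin 2) ℂ) 1 1 ≠ 0 →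
      AnalyticAt ℂ h (moebius γ z) → deriv h (moebius γ z) ≠ 0 →
      schwarzian h (moebius γ z) = (jfac γ z) ^ 4 * schwarzian h z := by
  intro γ z hz hh hh' hden hhγ hhγ'
  have hj := jfac_ne_zero γ hz.ne'
  have hγ' : deriv (moebius γ) z = 1 / jfac γ z ^ 2 := (hasDerivAt_moebius γ hj).deriv
  have hρdet := (ρ γ).det_ne_zero
  rw [Matrix.det_fin_two] at hρdet
  have key := (hequiv.eventuallyEq_comp_moebius γ hz hh hhγ hden).schwarzian_eq
  rw [schwarzian_comp hhγ (analyticAt_moebius γ hj) hhγ' (by simp [hγ', hj]),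
    schwarzian_comp (analyticAt_linear_fractional _ _ _ _ hden) hh
      (deriv_linear_fractional_ne_zero _ _ _ _ hden hρdet) hh',
    schwarzian_moebius γ hj, schwarzian_linear_fractional _ _ _ _ hden, hγ'] at key
  field_simp at key
  linear_combination key

/-- The Schwarz derivative of a `ρ`-equivariant function is an automorphic form of
weight 4: `S(h)(γ·z) = (cz+d)⁴ S(h)(z)`. -/
theorem schwarzian_of_equivariant_is_weight_four
    (Γ : Subgroup (Matrix.SpecialLinearGroup (Fin 2) ℝ))
    (ρ : Γ →* GL (Fin 2) ℂ) (h : ℂ → ℂ)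
    (hmero : MeromorphicOn h {z : ℂ | 0 < z.im})
    (hequiv : IsRhoEquivariant Γ ρ h) :
    ∀ γ : Γ, ∀ z : ℂ, 0 < z.im →
      AnalyticAt ℂ h z → deriv h z ≠ 0 →
      (ρ γ : Matrix (Fin 2) (Fin 2) ℂ) 1 0 * h z + (ρ γ : Matrix (Fin 2) (Fin 2) ℂ) 1 1 ≠ 0 →
      AnalyticAt ℂ h (moebius γ z) → deriv h (moebius γ z) ≠ 0 →
      schwarzian h (moebius γ z) = (jfac γ z) ^ 4 * schwarzian h z :=
  schwarzian_of_equivariant_is_weight_four_general Γ ρ h hequiv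
end

section
/- (Bol's identity) Let r be a nonnegative integer, let γ = [[a,b],[c,d]] ∈ SL(2,ℂ), let z₀ ∈ ℂ with c z₀ + d ≠ 0, and let F be a complex function analytic in a neighborhood of γ·z₀ = (a z₀ + b)/(c z₀ + d). Then the (r+1)-st derivative of the function w ↦ (cw+d)^r · F((aw+b)/(cw+d)) at z₀ equals (c z₀ + d)^{−(r+2)} · F^{(r+1)}(γ·z₀). -/
/-!
Write `S_m F (w) = (c w + d) ^ m * F (γ w)` (`moebiusSlash a b c d m F`), so that Bol's identity
is about `S_r F`. Since `γ' (w) = (c w + d) ^ (-2)` when `a d - b c = 1`, the product rule gives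
`(S_m F)' = m c S_{m-1} F + S_{m-2} F'`. Then `(S_{n-1} F)^{(n)} = S_{-n-1} F^{(n)}` follows by a
two-step induction on `n`: differentiating once and applying the claim for `n + 1` to `F` and for
`n` to `F'`, the two terms `± (n + 1) c S_{-n-2} F^{(n+1)}` cancel.
-/

open Filter Topology

noncomputable def moebiusSlash {𝕜 : Type*} [Field 𝕜] (a b c d : 𝕜) (m : ℤ) (F : 𝕜 → 𝕜)
    (w : 𝕜) : 𝕜 :=
  (c * w + d) ^ m * F ((a * w + b) / (c * w + d))

section MoebiusSlash

variable {𝕜 : Type*} [NontriviallyNormedField 𝕜] {a b c d z : 𝕜} {F : 𝕜 → 𝕜}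

lemma hasDerivAt_moebius_s8 (hdet : a * d - b * c = 1) (hz : c * z + d ≠ 0) :
    HasDerivAt (fun w => (a * w + b) / (c * w + d)) ((c * z + d) ^ (-2 : ℤ)) z := by
  have h := (((hasDerivAt_id' z).const_mul a).add_const b).fun_div
    (((hasDerivAt_id' z).const_mul c).add_const d) hz
  refine h.congr_deriv ?_
  rw [zpow_neg, zpow_two]
  field_simp
  linear_combination hdet

lemma hasDerivAt_moebiusSlash (hdet : a * d - b * c = 1) (hz : c * z + d ≠ 0)
    (hF : DifferentiableAt 𝕜 F ((a * z + b) / (c * z + d))) (m : ℤ) :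
    HasDerivAt (moebiusSlash a b c d m F)
      (m * c * moebiusSlash a b c d (m - 1) F z + moebiusSlash a b c d (m - 2) (deriv F) z) z := by
  have hpow := (hasDerivAt_zpow m _ (.inl hz)).comp z
    (((hasDerivAt_id' z).const_mul c).add_const d)
  have hcomp := hF.hasDerivAt.comp z (hasDerivAt_moebius_s8 hdet hz)
  refine (hpow.mul hcomp).congr_deriv ?_
  have : (c * z + d) ^ (m - 2) = (c * z + d) ^ m * (c * z + d) ^ (-2 : ℤ) := by
    rw [← zpow_add₀ hz]; ring_nf
  simp only [moebiusSlash, Function.comp_apply, this]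
  ring

lemma analyticAt_moebiusSlash (hz : c * z + d ≠ 0)
    (hF : AnalyticAt 𝕜 F ((a * z + b) / (c * z + d))) (m : ℤ) :
    AnalyticAt 𝕜 (moebiusSlash a b c d m F) z := by
  have hden : AnalyticAt 𝕜 (fun w => c * w + d) z := by fun_prop
  have hmoeb : AnalyticAt 𝕜 (fun w => (a * w + b) / (c * w + d)) z :=
    (by fun_prop : AnalyticAt 𝕜 (fun w => a * w + b) z).fun_div hden hz
  exact (hden.zpow hz).mul (AnalyticAt.comp (g := F) hF hmoeb)

lemma eventually_analyticAt_moebius [CompleteSpace 𝕜] (hz : c * z + d ≠ 0)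
    (hF : AnalyticAt 𝕜 F ((a * z + b) / (c * z + d))) :
    ∀ᶠ w in 𝓝 z, c * w + d ≠ 0 ∧ AnalyticAt 𝕜 F ((a * w + b) / (c * w + d)) := by
  have hden : ContinuousAt (fun w => c * w + d) z := by fun_prop
  have hmoeb : ContinuousAt (fun w => (a * w + b) / (c * w + d)) z :=
    (by fun_prop : ContinuousAt (fun w => a * w + b) z).div hden hz
  exact (hden.eventually_ne hz).and (hmoeb.eventually hF.eventually_analyticAt)

lemma deriv_moebiusSlash_eventuallyEq [CompleteSpace 𝕜] (hdet : a * d - b * c = 1)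
    (hz : c * z + d ≠ 0) (hF : AnalyticAt 𝕜 F ((a * z + b) / (c * z + d))) (m : ℤ) :
    deriv (moebiusSlash a b c d m F) =ᶠ[𝓝 z] fun w =>
      m * c * moebiusSlash a b c d (m - 1) F w + moebiusSlash a b c d (m - 2) (deriv F) w := by
  filter_upwards [eventually_analyticAt_moebius hz hF] with w ⟨hw, hFw⟩
  exact (hasDerivAt_moebiusSlash hdet hw hFw.differentiableAt m).deriv

lemma AnalyticAt.iteratedDeriv {E : Type*} [NormedAddCommGroup E] [NormedSpace 𝕜 E]
    [CompleteSpace E] {f : 𝕜 → E} {x : 𝕜} (h : AnalyticAt 𝕜 f x) (n : ℕ) :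
    AnalyticAt 𝕜 (iteratedDeriv n f) x := by
  simpa only [iteratedDeriv_eq_iterate] using h.iterated_deriv n

theorem iteratedDeriv_moebiusSlash [CompleteSpace 𝕜] (hdet : a * d - b * c = 1) (n : ℕ) :
    ∀ {F : 𝕜 → 𝕜} {z : 𝕜}, c * z + d ≠ 0 → AnalyticAt 𝕜 F ((a * z + b) / (c * z + d)) →
      iteratedDeriv n (moebiusSlash a b c d (n - 1) F) z =
        moebiusSlash a b c d (-n - 1) (iteratedDeriv n F) z := by
  induction n using Nat.twoStepInduction with
  | zero => intro F z _ _; simp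
  | one =>
    intro F z hz hF
    rw [iteratedDeriv_one, (hasDerivAt_moebiusSlash hdet hz hF.differentiableAt _).deriv]
    norm_num [iteratedDeriv_one]
  | more n ih₀ ih₁ =>
    intro F z hz hF
    have hinner : iteratedDeriv n (moebiusSlash a b c d (n - 1) (deriv F)) =ᶠ[𝓝 z]
        moebiusSlash a b c d (-n - 1) (iteratedDeriv (n + 1) F) := by
      filter_upwards [eventually_analyticAt_moebius hz hF] with w ⟨hw, hFw⟩
      rw [ih₀ hw hFw.deriv, iteratedDeriv_succ']
    have hexp : ((n + 2 : ℕ) : ℤ) - 1 = (n + 1 : ℕ) := by push_cast; ring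
    have hexp' : ((n + 1 : ℕ) : ℤ) - 2 = (n : ℤ) - 1 := by push_cast; ring
    calc iteratedDeriv (n + 2) (moebiusSlash a b c d ((n + 2 : ℕ) - 1) F) z
        = iteratedDeriv (n + 1) (fun w => ((n + 1 : ℕ) : ℤ) * c *
            moebiusSlash a b c d ((n + 1 : ℕ) - 1) F w +
              moebiusSlash a b c d (n - 1) (deriv F) w) z := by
          rw [hexp, iteratedDeriv_succ', ← hexp',
            (deriv_moebiusSlash_eventuallyEq hdet hz hF _).iteratedDeriv_eq]
      _ = ((n + 1 : ℕ) : ℤ) * c *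
              iteratedDeriv (n + 1) (moebiusSlash a b c d ((n + 1 : ℕ) - 1) F) z
            + deriv (iteratedDeriv n (moebiusSlash a b c d (n - 1) (deriv F))) z := by
          rw [iteratedDeriv_fun_add
            (analyticAt_const.fun_mul (analyticAt_moebiusSlash hz hF _)).contDiffAt
            (analyticAt_moebiusSlash hz hF.deriv _).contDiffAt, iteratedDeriv_const_mul_field,
            iteratedDeriv_succ (f := moebiusSlash a b c d _ (deriv F))]
      _ = ((n + 1 : ℕ) : ℤ) * c *
              moebiusSlash a b c d (-(n + 1 : ℕ) - 1) (iteratedDeriv (n + 1) F) z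
            + deriv (moebiusSlash a b c d (-n - 1) (iteratedDeriv (n + 1) F)) z := by
          rw [ih₁ hz hF, hinner.deriv_eq]
      _ = moebiusSlash a b c d (-(n + 2 : ℕ) - 1) (iteratedDeriv (n + 2) F) z := by
          rw [(hasDerivAt_moebiusSlash hdet hz (hF.iteratedDeriv _).differentiableAt _).deriv,
            ← iteratedDeriv_succ]
          simp only [moebiusSlash]
          push_cast
          ring_nf

end MoebiusSlash

/-- Bol's identity: for `γ = [[a,b],[c,d]] ∈ SL(2,ℂ)` and `F` analytic near `γ·z₀`,
`(F|₋ᵣγ)^{(r+1)}(z₀) = (cz₀+d)^{-(r+2)} F^{(r+1)}(γ·z₀)`. -/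
theorem bol_identity (r : ℕ) (a b c d : ℂ) (hdet : a * d - b * c = 1)
    (z₀ : ℂ) (hden : c * z₀ + d ≠ 0) (F : ℂ → ℂ)
    (hF : AnalyticAt ℂ F ((a * z₀ + b) / (c * z₀ + d))) :
    iteratedDeriv (r + 1) (fun w => (c * w + d) ^ r * F ((a * w + b) / (c * w + d))) z₀ =
      (c * z₀ + d) ^ (-(r + 2 : ℤ)) *
        iteratedDeriv (r + 1) F ((a * z₀ + b) / (c * z₀ + d)) := by
  have h := iteratedDeriv_moebiusSlash hdet (r + 1) hden hF
  have hweight : ((r + 1 : ℕ) : ℤ) - 1 = r := by push_cast; ring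
  have hweight' : -((r + 1 : ℕ) : ℤ) - 1 = -(r + 2 : ℤ) := by push_cast; ring
  rw [hweight, hweight'] at h
  unfold moebiusSlash at h
  simpa only [zpow_natCast] using h
end
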